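/- Let Ψ₁, Ψ₂ be entropy functions. Then for every α ≥ 1 and every finite positive Borel measure π^α attaining C_ub^α(μ,ν), the total mass of π^α satisfies Ψ₁(π^α(X×Y)) ≤ C(μ,ν); consequently, since Ψ₁ is superlinear, sup_{α ≥ 1} π^α(X×Y) < ∞, i.e., the family of minimizers with α ≥ 1 has uniformly bounded total mass. -/

import Mathlib

open MeasureTheory Filter
open scoped ENNReal NNReal Topology Classical

noncomputable section

/-- The quadratic transport cost `c(x,y) = τ‖x-y‖₂²`. -/
def cost {d : ℕ} (τ : ℝ) (x y : EuclideanSpace ℝ (Fin d)) : ℝ := τ * ‖x - y‖ ^ 2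

/-- An entropy function `Ψ : ℝ → [0,∞]`: convex, lower semicontinuous, non-negative
(automatic from the codomain), `Ψ(x) = ∞` for `x < 0`, `Ψ(1) = 0`, and superlinear. -/
structure IsEntropy (Ψ : ℝ → ℝ≥0∞) : Prop where
  convex : ∀ x y : ℝ, ∀ t : ℝ, 0 ≤ t → t ≤ 1 →
    Ψ (t * x + (1 - t) * y) ≤ ENNReal.ofReal t * Ψ x + ENNReal.ofReal (1 - t) * Ψ y
  lsc : LowerSemicontinuous Ψ
  eq_top_of_neg : ∀ x : ℝ, x < 0 → Ψ x = ∞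
  one_eq_zero : Ψ 1 = 0
  superlinear : Tendsto (fun t : ℝ => Ψ t / ENNReal.ofReal t) atTop (𝓝 ∞)

/-- The Csiszár divergence `D_Ψ(ρ|σ) = ∫ Ψ(dρ/dσ) dσ` if `ρ ≪ σ`, and `∞` otherwise. -/
def csiszar {Z : Type*} [MeasurableSpace Z] (Ψ : ℝ → ℝ≥0∞) (ρ σ : Measure Z) : ℝ≥0∞ :=
  if ρ ≪ σ then ∫⁻ z, Ψ ((ρ.rnDeriv σ z).toReal) ∂σ else ∞

/-- The objective of the `α`-scaled unbalanced optimal transport problem: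
`∫ c dπ + α D_{Ψ₁}(π₀|μ) + α D_{Ψ₂}(π₁|ν)`. -/
def uotObj {d : ℕ} (τ α : ℝ) (Ψ₁ Ψ₂ : ℝ → ℝ≥0∞)
    (μ ν : Measure (EuclideanSpace ℝ (Fin d)))
    (π : Measure (EuclideanSpace ℝ (Fin d) × EuclideanSpace ℝ (Fin d))) : ℝ≥0∞ :=
  (∫⁻ z, ENNReal.ofReal (cost τ z.1 z.2) ∂π)
    + ENNReal.ofReal α * csiszar Ψ₁ (π.map Prod.fst) μ
    + ENNReal.ofReal α * csiszar Ψ₂ (π.map Prod.snd) ν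

/-- The `α`-scaled unbalanced optimal transport cost `C_ub^α(μ,ν)`, the infimum of the
objective over finite positive Borel measures `π` supported on `X × Y`. -/
def UOTcost {d : ℕ} (τ α : ℝ) (Ψ₁ Ψ₂ : ℝ → ℝ≥0∞) (X Y : Set (EuclideanSpace ℝ (Fin d)))
    (μ ν : Measure (EuclideanSpace ℝ (Fin d))) : ℝ≥0∞ :=
  ⨅ (π : Measure (EuclideanSpace ℝ (Fin d) × EuclideanSpace ℝ (Fin d)))
    (_ : IsFiniteMeasure π) (_ : π ((X ×ˢ Y)ᶜ) = 0), uotObj τ α Ψ₁ Ψ₂ μ ν π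

/-- The optimal transport cost `C(μ,ν) = inf_{π ∈ Π(μ,ν)} ∫ c dπ`. -/
def OTcost {d : ℕ} (τ : ℝ) (μ ν : Measure (EuclideanSpace ℝ (Fin d))) : ℝ≥0∞ :=
  ⨅ (π : Measure (EuclideanSpace ℝ (Fin d) × EuclideanSpace ℝ (Fin d)))
    (_ : π.map Prod.fst = μ ∧ π.map Prod.snd = ν),
    ∫⁻ z, ENNReal.ofReal (cost τ z.1 z.2) ∂π

/-!
Any coupling `γ` of `μ` and `ν` is admissible for the unbalanced problem and has vanishing
divergence terms, so `C_ub^α(μ,ν) ≤ C(μ,ν)`. For a minimizer `π`, all terms of the objective are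
non-negative and `α ≥ 1`, so `D_{Ψ₁}(π₀|μ) ≤ C(μ,ν)`; Jensen's inequality for the convex function
`Ψ₁` applied to the density `dπ₀/dμ`, whose `μ`-mean is the mass of `π`, bounds `Ψ₁(π(X×Y))`
by that divergence. Finally `C(μ,ν)` is finite since the cost is bounded on the compact set `X×Y`,
and superlinearity of `Ψ₁` turns `Ψ₁(mass) ≤ C(μ,ν)` into a bound on the mass.
-/

open Set

/-- Stated by hand because Mathlib's `ConvexOn` needs an `ℝ`-module codomain, which `ℝ≥0∞` is
not. -/
def ConvexENNReal (Ψ : ℝ → ℝ≥0∞) : Prop :=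
  ∀ x y t : ℝ, 0 ≤ t → t ≤ 1 →
    Ψ (t * x + (1 - t) * y) ≤ ENNReal.ofReal t * Ψ x + ENNReal.ofReal (1 - t) * Ψ y

theorem ConvexOn.add_rightDeriv_mul_sub_le {S : Set ℝ} {φ : ℝ → ℝ} {x y : ℝ}
    (hφ : ConvexOn ℝ S φ) (hx : x ∈ interior S) (hy : y ∈ S) :
    φ x + derivWithin φ (Ioi x) x * (y - x) ≤ φ y := by
  rcases lt_trichotomy y x with hyx | rfl | hxy
  · have hslope := (hφ.slope_le_leftDeriv_of_mem_interior hy hx hyx).trans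
      (hφ.leftDeriv_le_rightDeriv_of_mem_interior hx)
    rw [slope_def_field, div_le_iff₀ (sub_pos.2 hyx)] at hslope
    linarith
  · simp
  · have hslope := hφ.rightDeriv_le_slope_of_mem_interior hx hy hxy
    rw [slope_def_field, le_div_iff₀ (sub_pos.2 hxy)] at hslope
    linarith

theorem Set.OrdConnected.interior_closure_subset {S : Set ℝ} (hS : S.OrdConnected) :
    interior (closure S) ⊆ interior S := by
  intro x hx
  obtain ⟨l, u, ⟨hlx, hxu⟩, hlu⟩ :=
    (mem_nhds_iff_exists_Ioo_subset.1 (mem_interior_iff_mem_nhds.1 hx))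
  have meets : ∀ a b, l ≤ a → a < b → b ≤ u → (S ∩ Ioo a b).Nonempty := fun a b hla hab hbu =>
    (closure_inter_open_nonempty_iff isOpen_Ioo).1 ⟨(a + b) / 2,
      hlu ⟨by linarith, by linarith⟩, by linarith, by linarith⟩
  obtain ⟨p, hpS, -, hpx⟩ := meets l x le_rfl hlx hxu.le
  obtain ⟨q, hqS, hxq, -⟩ := meets x u hlx.le hxu le_rfl
  exact mem_interior_iff_mem_nhds.2
    (mem_of_superset (Ioo_mem_nhds hpx hxq) (Ioo_subset_Icc_self.trans (hS.out hpS hqS)))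

theorem ofReal_integral_le_lintegral_ofReal {α : Type*} [MeasurableSpace α] {μ : Measure α}
    {g : α → ℝ} (hg : Integrable g μ) :
    ENNReal.ofReal (∫ a, g a ∂μ) ≤ ∫⁻ a, ENNReal.ofReal (g a) ∂μ := by
  rw [integral_eq_lintegral_pos_part_sub_lintegral_neg_part hg]
  exact (ENNReal.ofReal_le_ofReal (sub_le_self _ ENNReal.toReal_nonneg)).trans
    ENNReal.ofReal_toReal_le

section Jensen

variable {Ψ : ℝ → ℝ≥0∞} {Z : Type*} [MeasurableSpace Z] {μ : Measure Z}
  [IsProbabilityMeasure μ] {f : Z → ℝ}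

theorem ofReal_le_lintegral_of_affine_le (hf : Integrable f μ) {a s : ℝ}
    (hℓ : ∀ u, ENNReal.ofReal (a + s * (u - ∫ z, f z ∂μ)) ≤ Ψ u) :
    ENNReal.ofReal a ≤ ∫⁻ z, Ψ (f z) ∂μ := by
  have hslope : Integrable (fun z => s * (f z - ∫ z, f z ∂μ)) μ :=
    (hf.sub (integrable_const _)).const_mul s
  have hmean : ∫ z, (a + s * (f z - ∫ z, f z ∂μ)) ∂μ = a := by
    rw [integral_add (integrable_const a) hslope, integral_const_mul,
      integral_sub hf (integrable_const _)]
    simp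
  calc ENNReal.ofReal a = ENNReal.ofReal (∫ z, (a + s * (f z - ∫ z, f z ∂μ)) ∂μ) := by rw [hmean]
    _ ≤ ∫⁻ z, ENNReal.ofReal (a + s * (f z - ∫ z, f z ∂μ)) ∂μ :=
      ofReal_integral_le_lintegral_ofReal ((integrable_const a).add hslope)
    _ ≤ ∫⁻ z, Ψ (f z) ∂μ := lintegral_mono fun z => hℓ (f z)

namespace ConvexENNReal

theorem convexOn_toReal (hΨ : ConvexENNReal Ψ) :
    ConvexOn ℝ {t | Ψ t ≠ ∞} (fun t => (Ψ t).toReal) := by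
  have key : ∀ x ∈ {t | Ψ t ≠ ∞}, ∀ y ∈ {t | Ψ t ≠ ∞}, ∀ a b : ℝ, 0 ≤ a → 0 ≤ b → a + b = 1 →
      Ψ (a • x + b • y) ≤ ENNReal.ofReal (a * (Ψ x).toReal + b * (Ψ y).toReal) := by
    intro x hx y hy a b ha hb hab
    obtain rfl : b = 1 - a := by linarith
    rw [ENNReal.ofReal_add (by positivity) (by positivity), ENNReal.ofReal_mul ha,
      ENNReal.ofReal_mul hb, ENNReal.ofReal_toReal hx, ENNReal.ofReal_toReal hy]
    exact hΨ x y a ha (by linarith)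
  refine ⟨fun x hx y hy a b ha hb hab => ne_top_of_le_ne_top ENNReal.ofReal_ne_top
    (key x hx y hy a b ha hb hab), fun x hx y hy a b ha hb hab => ?_⟩
  exact ENNReal.toReal_le_of_le_ofReal (by positivity) (key x hx y hy a b ha hb hab)

theorem map_integral_le (hΨ : ConvexENNReal Ψ) (hΨm : Measurable Ψ) (hf : Integrable f μ) :
    Ψ (∫ z, f z ∂μ) ≤ ∫⁻ z, Ψ (f z) ∂μ := by
  set m := ∫ z, f z ∂μ
  rcases eq_or_ne (∫⁻ z, Ψ (f z) ∂μ) ∞ with hinf | hfin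
  · simp [hinf]
  have hφ := hΨ.convexOn_toReal
  have hfD : ∀ᵐ z ∂μ, f z ∈ closure {t | Ψ t ≠ ∞} :=
    (ae_lt_top' (hΨm.comp_aemeasurable hf.aemeasurable) hfin).mono
      fun z hz => subset_closure hz.ne
  -- either `f` is a.e. constant, or its mean lies in the interior of the effective domain of `Ψ`,
  -- where `Ψ` has a supporting line
  rcases hφ.1.closure.ordConnected.strictConvex.ae_eq_const_or_average_mem_interior
    isClosed_closure hfD hf with hconst | hmean
  · rw [average_eq_integral] at hconst
    calc Ψ m = ∫⁻ _, Ψ m ∂μ := by simp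
      _ ≤ ∫⁻ z, Ψ (f z) ∂μ := (lintegral_congr_ae (hconst.fun_comp Ψ).symm).le
  · rw [average_eq_integral] at hmean
    have hm := hφ.1.ordConnected.interior_closure_subset hmean
    rw [← ENNReal.ofReal_toReal (interior_subset hm : Ψ _ ≠ ∞)]
    refine ofReal_le_lintegral_of_affine_le hf
      (s := derivWithin (fun t => (Ψ t).toReal) (Ioi m) m) fun u => ?_
    by_cases hu : Ψ u = ∞
    · simp [hu]
    rw [← ENNReal.ofReal_toReal hu]
    exact ENNReal.ofReal_le_ofReal (hφ.add_rightDeriv_mul_sub_le hm hu)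

end ConvexENNReal

end Jensen

theorem ConvexENNReal.apply_measure_univ_le_csiszar {Ψ : ℝ → ℝ≥0∞} (hΨ : ConvexENNReal Ψ)
    (hΨm : Measurable Ψ) {Z : Type*} [MeasurableSpace Z] (ρ σ : Measure Z) [IsFiniteMeasure ρ]
    [IsProbabilityMeasure σ] : Ψ (ρ univ).toReal ≤ csiszar Ψ ρ σ := by
  rw [csiszar]
  split_ifs with hac
  · have := hΨ.map_integral_le hΨm (Measure.integrable_toReal_rnDeriv (μ := ρ) (ν := σ))
    rwa [Measure.integral_toReal_rnDeriv hac, measureReal_def] at this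
  · exact le_top

theorem csiszar_self {Z : Type*} [MeasurableSpace Z] {Ψ : ℝ → ℝ≥0∞} (hΨ1 : Ψ 1 = 0)
    (μ : Measure Z) [SigmaFinite μ] : csiszar Ψ μ μ = 0 := by
  rw [csiszar, if_pos (Measure.AbsolutelyContinuous.refl μ)]
  refine (lintegral_congr_ae ((Measure.rnDeriv_self μ).mono fun z hz => ?_)).trans lintegral_zero
  simp [hz, hΨ1]

theorem measure_compl_prod_eq_zero {α β : Type*} [MeasurableSpace α] [MeasurableSpace β]
    {π : Measure (α × β)} {X : Set α} {Y : Set β} (hX : MeasurableSet X) (hY : MeasurableSet Y)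
    (hπX : π.map Prod.fst Xᶜ = 0) (hπY : π.map Prod.snd Yᶜ = 0) : π (X ×ˢ Y)ᶜ = 0 := by
  rw [Measure.map_apply measurable_fst hX.compl] at hπX
  rw [Measure.map_apply measurable_snd hY.compl] at hπY
  rw [compl_prod_eq_union, prod_univ, univ_prod]
  exact measure_union_null hπX hπY

theorem exists_le_of_superlinear {Ψ : ℝ → ℝ≥0∞}
    (hΨ : Tendsto (fun t : ℝ => Ψ t / ENNReal.ofReal t) atTop (𝓝 ∞)) {K : ℝ≥0∞} (hK : K ≠ ∞) :
    ∃ B : ℝ, ∀ t, Ψ t ≤ K → t ≤ B := by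
  obtain ⟨T, hT⟩ := eventually_atTop.1 (hΨ.eventually (eventually_gt_nhds hK.lt_top))
  refine ⟨max T 1, fun t ht => le_of_not_gt fun htB =>
    (hT t ((le_max_left _ _).trans htB.le)).not_ge ?_⟩
  have h1t : 1 ≤ ENNReal.ofReal t := ENNReal.one_le_ofReal.2 ((le_max_right _ _).trans htB.le)
  exact ENNReal.div_le_of_le_mul (ht.trans (le_mul_of_one_le_right' h1t))

section Transport

variable {d : ℕ} {τ α : ℝ} {Ψ₁ Ψ₂ : ℝ → ℝ≥0∞} {X Y : Set (EuclideanSpace ℝ (Fin d))}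
  {μ ν : Measure (EuclideanSpace ℝ (Fin d))}
  {π : Measure (EuclideanSpace ℝ (Fin d) × EuclideanSpace ℝ (Fin d))}

theorem csiszar_map_fst_le_uotObj (hα : 1 ≤ α) :
    csiszar Ψ₁ (π.map Prod.fst) μ ≤ uotObj τ α Ψ₁ Ψ₂ μ ν π :=
  calc csiszar Ψ₁ (π.map Prod.fst) μ
      ≤ ENNReal.ofReal α * csiszar Ψ₁ (π.map Prod.fst) μ :=
        le_mul_of_one_le_left' (ENNReal.one_le_ofReal.2 hα)
    _ ≤ uotObj τ α Ψ₁ Ψ₂ μ ν π := le_add_self.trans le_self_add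

theorem UOTcost_le_OTcost (hΨ₁ : Ψ₁ 1 = 0) (hΨ₂ : Ψ₂ 1 = 0) (hX : MeasurableSet X)
    (hY : MeasurableSet Y) [IsProbabilityMeasure μ] [IsProbabilityMeasure ν] (hμX : μ Xᶜ = 0)
    (hνY : ν Yᶜ = 0) : UOTcost τ α Ψ₁ Ψ₂ X Y μ ν ≤ OTcost τ μ ν := by
  refine le_iInf₂ fun π ⟨hπμ, hπν⟩ => ?_
  have : IsProbabilityMeasure (π.map Prod.fst) := hπμ ▸ inferInstance
  have := Measure.isProbabilityMeasure_of_map (μ := π) Prod.fst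
  have hnull := measure_compl_prod_eq_zero hX hY (hπμ ▸ hμX) (hπν ▸ hνY)
  refine (iInf_le_of_le π (iInf_le_of_le (inferInstance : IsFiniteMeasure π)
    (iInf_le _ hnull))).trans_eq ?_
  simp [uotObj, hπμ, hπν, csiszar_self hΨ₁, csiszar_self hΨ₂]

theorem OTcost_ne_top (hX : IsCompact X) (hY : IsCompact Y) [IsProbabilityMeasure μ]
    [IsProbabilityMeasure ν] (hμX : μ Xᶜ = 0) (hνY : ν Yᶜ = 0) : OTcost τ μ ν ≠ ∞ := by
  obtain ⟨C, hC⟩ := (hX.prod hY).exists_bound_of_continuousOn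
    (f := fun z => cost τ z.1 z.2) (by unfold cost; fun_prop)
  have hnull : μ.prod ν (X ×ˢ Y)ᶜ = 0 := measure_compl_prod_eq_zero hX.isClosed.measurableSet
    hY.isClosed.measurableSet (by simpa using hμX) (by simpa using hνY)
  refine ne_top_of_le_ne_top (ENNReal.ofReal_ne_top (r := C)) ?_
  refine (iInf₂_le (μ.prod ν) ⟨by simp, by simp⟩).trans ?_
  calc ∫⁻ z, ENNReal.ofReal (cost τ z.1 z.2) ∂μ.prod ν ≤ ∫⁻ _, ENNReal.ofReal C ∂μ.prod ν :=
        lintegral_mono_ae ((measure_eq_zero_iff_ae_notMem.1 hnull).mono fun z hz =>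
          ENNReal.ofReal_le_ofReal ((le_abs_self _).trans (hC z (not_not.1 hz))))
    _ = ENNReal.ofReal C := by simp

theorem apply_mass_le_OTcost_of_eq_UOTcost (hΨ₁ : ConvexENNReal Ψ₁) (hΨ₁m : Measurable Ψ₁)
    (hΨ₁1 : Ψ₁ 1 = 0) (hΨ₂1 : Ψ₂ 1 = 0) (hX : MeasurableSet X) (hY : MeasurableSet Y)
    [IsProbabilityMeasure μ] [IsProbabilityMeasure ν] (hμX : μ Xᶜ = 0) (hνY : ν Yᶜ = 0)
    (hα : 1 ≤ α) [IsFiniteMeasure π] (hopt : uotObj τ α Ψ₁ Ψ₂ μ ν π = UOTcost τ α Ψ₁ Ψ₂ X Y μ ν) :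
    Ψ₁ (π univ).toReal ≤ OTcost τ μ ν :=
  calc Ψ₁ (π univ).toReal = Ψ₁ ((π.map Prod.fst) univ).toReal := by
        rw [Measure.map_apply measurable_fst MeasurableSet.univ, preimage_univ]
    _ ≤ csiszar Ψ₁ (π.map Prod.fst) μ := hΨ₁.apply_measure_univ_le_csiszar hΨ₁m _ _
    _ ≤ uotObj τ α Ψ₁ Ψ₂ μ ν π := csiszar_map_fst_le_uotObj hα
    _ = UOTcost τ α Ψ₁ Ψ₂ X Y μ ν := hopt
    _ ≤ OTcost τ μ ν := UOTcost_le_OTcost hΨ₁1 hΨ₂1 hX hY hμX hνY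

end Transport

theorem uot_minimizers_uniformly_bounded_mass_general
    {d : ℕ} (τ : ℝ)
    (X Y : Set (EuclideanSpace ℝ (Fin d))) (hX : IsCompact X) (hY : IsCompact Y)
    (μ ν : Measure (EuclideanSpace ℝ (Fin d)))
    [IsProbabilityMeasure μ] [IsProbabilityMeasure ν]
    (hμX : μ Xᶜ = 0) (hνY : ν Yᶜ = 0)
    (Ψ₁ Ψ₂ : ℝ → ℝ≥0∞) (hΨ₁ : IsEntropy Ψ₁) (hΨ₂ : IsEntropy Ψ₂) :
    (∀ α : ℝ, 1 ≤ α → ∀ π : Measure (EuclideanSpace ℝ (Fin d) × EuclideanSpace ℝ (Fin d)),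
      IsFiniteMeasure π → π ((X ×ˢ Y)ᶜ) = 0 →
      uotObj τ α Ψ₁ Ψ₂ μ ν π = UOTcost τ α Ψ₁ Ψ₂ X Y μ ν →
      Ψ₁ ((π Set.univ).toReal) ≤ OTcost τ μ ν) ∧
    ∃ B : ℝ≥0∞, B < ∞ ∧ ∀ α : ℝ, 1 ≤ α → ∀ π : Measure (EuclideanSpace ℝ (Fin d) × EuclideanSpace ℝ (Fin d)),
      IsFiniteMeasure π → π ((X ×ˢ Y)ᶜ) = 0 →
      uotObj τ α Ψ₁ Ψ₂ μ ν π = UOTcost τ α Ψ₁ Ψ₂ X Y μ ν →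
      π Set.univ ≤ B := by
  have mass_le : ∀ α : ℝ, 1 ≤ α → ∀ π, IsFiniteMeasure π →
      uotObj τ α Ψ₁ Ψ₂ μ ν π = UOTcost τ α Ψ₁ Ψ₂ X Y μ ν → Ψ₁ (π univ).toReal ≤ OTcost τ μ ν :=
    fun α hα π _ hopt => apply_mass_le_OTcost_of_eq_UOTcost hΨ₁.convex hΨ₁.lsc.measurable
      hΨ₁.one_eq_zero hΨ₂.one_eq_zero hX.isClosed.measurableSet hY.isClosed.measurableSet hμX hνY
      hα hopt
  refine ⟨fun α hα π hπ _ hopt => mass_le α hα π hπ hopt, ?_⟩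
  obtain ⟨B, hB⟩ := exists_le_of_superlinear hΨ₁.superlinear (OTcost_ne_top hX hY hμX hνY)
  refine ⟨ENNReal.ofReal B, ENNReal.ofReal_lt_top, fun α hα π hπ _ hopt => ?_⟩
  rw [← ENNReal.ofReal_toReal (measure_ne_top π univ)]
  exact ENNReal.ofReal_le_ofReal (hB _ (mass_le α hα π hπ hopt))

/-- For every `α ≥ 1` and every minimizer `π^α` of `C_ub^α(μ,ν)`, one
has `Ψ₁(π^α(X×Y)) ≤ C(μ,ν)`; consequently the minimizers with `α ≥ 1` have uniformly
bounded total mass. -/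
theorem uot_minimizers_uniformly_bounded_mass
    {d : ℕ} (τ : ℝ) (hτ : 0 < τ)
    (X Y : Set (EuclideanSpace ℝ (Fin d))) (hX : IsCompact X) (hY : IsCompact Y)
    (μ ν : Measure (EuclideanSpace ℝ (Fin d)))
    [IsProbabilityMeasure μ] [IsProbabilityMeasure ν]
    (hμX : μ Xᶜ = 0) (hνY : ν Yᶜ = 0)
    (Ψ₁ Ψ₂ : ℝ → ℝ≥0∞) (hΨ₁ : IsEntropy Ψ₁) (hΨ₂ : IsEntropy Ψ₂) :
    (∀ α : ℝ, 1 ≤ α → ∀ π : Measure (EuclideanSpace ℝ (Fin d) × EuclideanSpace ℝ (Fin d)),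
      IsFiniteMeasure π → π ((X ×ˢ Y)ᶜ) = 0 →
      uotObj τ α Ψ₁ Ψ₂ μ ν π = UOTcost τ α Ψ₁ Ψ₂ X Y μ ν →
      Ψ₁ ((π Set.univ).toReal) ≤ OTcost τ μ ν) ∧
    ∃ B : ℝ≥0∞, B < ∞ ∧ ∀ α : ℝ, 1 ≤ α → ∀ π : Measure (EuclideanSpace ℝ (Fin d) × EuclideanSpace ℝ (Fin d)),
      IsFiniteMeasure π → π ((X ×ˢ Y)ᶜ) = 0 →
      uotObj τ α Ψ₁ Ψ₂ μ ν π = UOTcost τ α Ψ₁ Ψ₂ X Y μ ν →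
      π Set.univ ≤ B :=
  uot_minimizers_uniformly_bounded_mass_general τ X Y hX hY μ ν hμX hνY Ψ₁ Ψ₂ hΨ₁ hΨ₂

end
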